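/- A formula A is a tautology if and only if every co-clique of A contains two leaves labelled by complementary literals (some variable P occurring both as P and as ¬P). -/

import Mathlib

/-- Literals: propositional variables and their negations. -/
inductive Lit where
  | pos : Nat → Lit
  | neg : Nat → Lit
deriving DecidableEq

/-- Formulas of classical propositional logic, built from literals by binary ∧ and ∨. -/
inductive Formula where
  | lit : Lit → Formula
  | and : Formula → Formula → Formula
  | or  : Formula → Formula → Formula

/-- Leaves of the parse tree, identified by their positions (paths: `false` = left,
`true` = right). -/
def Formula.leaves : Formula → Set (List Bool)
  | .lit _ => {[]}
  | .and A B => (fun p => false :: p) '' A.leaves ∪ (fun p => true :: p) '' B.leaves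
  | .or A B  => (fun p => false :: p) '' A.leaves ∪ (fun p => true :: p) '' B.leaves

/-- The literal labelling the leaf at a given path, if any. -/
def Formula.labelAt : Formula → List Bool → Option Lit
  | .lit l, [] => some l
  | .and A B, b :: p => if b then B.labelAt p else A.labelAt p
  | .or A B, b :: p => if b then B.labelAt p else A.labelAt p
  | _, _ => none

/-- ∨-resolutions of a formula: delete one argument subtree at each ∨-vertex. -/
inductive Res : Formula → Type where
  | lit : (l : Lit) → Res (.lit l)
  | and : {A B : Formula} → Res A → Res B → Res (.and A B)
  | orL : {A B : Formula} → Res A → Res (.or A B)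
  | orR : {A B : Formula} → Res B → Res (.or A B)

/-- The set of leaves of `A` retained by an ∨-resolution. -/
def Res.leafSet : {A : Formula} → Res A → Set (List Bool)
  | _, .lit _ => {[]}
  | _, .and ra rb => (fun p => false :: p) '' ra.leafSet ∪ (fun p => true :: p) '' rb.leafSet
  | _, .orL ra => (fun p => false :: p) '' ra.leafSet
  | _, .orR rb => (fun p => true :: p) '' rb.leafSet

/-- Cliques: leaf sets of ∨-resolutions. -/
def Formula.cliques (A : Formula) : Set (Set (List Bool)) :=
  {L | ∃ r : Res A, r.leafSet = L}

/-- ∧-resolutions of a formula: delete one argument subtree at each ∧-vertex. -/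
inductive CoRes : Formula → Type where
  | lit : (l : Lit) → CoRes (.lit l)
  | or : {A B : Formula} → CoRes A → CoRes B → CoRes (.or A B)
  | andL : {A B : Formula} → CoRes A → CoRes (.and A B)
  | andR : {A B : Formula} → CoRes B → CoRes (.and A B)

/-- The set of leaves of `A` retained by an ∧-resolution. -/
def CoRes.leafSet : {A : Formula} → CoRes A → Set (List Bool)
  | _, .lit _ => {[]}
  | _, .or ra rb => (fun p => false :: p) '' ra.leafSet ∪ (fun p => true :: p) '' rb.leafSet
  | _, .andL ra => (fun p => false :: p) '' ra.leafSet
  | _, .andR rb => (fun p => true :: p) '' rb.leafSet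

/-- Co-cliques: leaf sets of ∧-resolutions. -/
def Formula.cocliques (A : Formula) : Set (Set (List Bool)) :=
  {M | ∃ r : CoRes A, r.leafSet = M}

/-- Truth of a literal under a valuation. -/
def Lit.eval (v : Nat → Bool) : Lit → Bool
  | .pos n => v n
  | .neg n => !(v n)

/-- Standard Boolean semantics. -/
def Formula.eval (v : Nat → Bool) : Formula → Bool
  | .lit l => l.eval v
  | .and A B => A.eval v && B.eval v
  | .or A B => A.eval v || B.eval v

/-- Number of ∨-vertices in the parse tree. -/
def Formula.orCount : Formula → Nat
  | .lit _ => 0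
  | .and A B => A.orCount + B.orCount
  | .or A B => A.orCount + B.orCount + 1

/-- Number of ∧-vertices in the parse tree. -/
def Formula.andCount : Formula → Nat
  | .lit _ => 0
  | .and A B => A.andCount + B.andCount + 1
  | .or A B => A.andCount + B.andCount

/-- Complement of a literal. -/
def Lit.compl : Lit → Lit
  | .pos n => .neg n
  | .neg n => .pos n

/-- De Morgan dual: swap ∧ with ∨ and negate every literal. -/
def Formula.dual : Formula → Formula
  | .lit l => .lit l.compl
  | .and A B => .or A.dual B.dual
  | .or A B => .and A.dual B.dual

/-!
If `v` falsifies `A`, choosing a false conjunct at every ∧-vertex yields an ∧-resolution all of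
whose leaves are false under `v`; conversely, such an ∧-resolution forces `A` to be false under
`v`. So `A` fails to be a tautology iff some co-clique has all its literals simultaneously
falsifiable, and a set of literals is simultaneously falsifiable iff it contains no
complementary pair: make `P` true exactly when `¬P` occurs.
-/

namespace Formula

variable {A : Formula} {v : Nat → Bool} {M N : Set (List Bool)}

def FalsifiesLeaves (A : Formula) (v : Nat → Bool) (M : Set (List Bool)) : Prop :=
  ∀ p ∈ M, ∀ l, A.labelAt p = some l → l.eval v = false

def HasComplementaryPair (A : Formula) (M : Set (List Bool)) : Prop :=
  ∃ p ∈ M, ∃ q ∈ M, ∃ n : Nat, A.labelAt p = some (.pos n) ∧ A.labelAt q = some (.neg n)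

theorem lit_falsifiesLeaves_singleton_nil (l : Lit) :
    (Formula.lit l).FalsifiesLeaves v {[]} ↔ l.eval v = false := by
  simp [FalsifiesLeaves, labelAt]

theorem falsifiesLeaves_union :
    A.FalsifiesLeaves v (M ∪ N) ↔ A.FalsifiesLeaves v M ∧ A.FalsifiesLeaves v N := by
  simp only [FalsifiesLeaves, Set.mem_union, or_imp, forall_and]

theorem falsifiesLeaves_image_cons {C D : Formula} {b : Bool}
    (h : ∀ p, C.labelAt (b :: p) = D.labelAt p) :
    C.FalsifiesLeaves v ((b :: ·) '' M) ↔ D.FalsifiesLeaves v M := by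
  simp [FalsifiesLeaves, h]

theorem _root_.CoRes.eval_eq_false (r : CoRes A) (h : A.FalsifiesLeaves v r.leafSet) :
    A.eval v = false := by
  induction r with
  | lit l => simpa [eval] using (lit_falsifiesLeaves_singleton_nil l).1 h
  | or _ _ iha ihb =>
    rw [CoRes.leafSet, falsifiesLeaves_union, falsifiesLeaves_image_cons (fun _ => rfl),
      falsifiesLeaves_image_cons (fun _ => rfl)] at h
    simp [eval, iha h.1, ihb h.2]
  | andL _ iha =>
    rw [CoRes.leafSet, falsifiesLeaves_image_cons (fun _ => rfl)] at h
    simp [eval, iha h]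
  | andR _ ihb =>
    rw [CoRes.leafSet, falsifiesLeaves_image_cons (fun _ => rfl)] at h
    simp [eval, ihb h]

theorem exists_coRes_falsifiesLeaves (h : A.eval v = false) :
    ∃ r : CoRes A, A.FalsifiesLeaves v r.leafSet := by
  induction A with
  | lit l => exact ⟨.lit l, (lit_falsifiesLeaves_singleton_nil l).2 h⟩
  | and A B iha ihb =>
    rcases Bool.and_eq_false_iff.1 h with hA | hB
    · obtain ⟨ra, hra⟩ := iha hA
      exact ⟨.andL ra, (falsifiesLeaves_image_cons (fun _ => rfl)).2 hra⟩
    · obtain ⟨rb, hrb⟩ := ihb hB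
      exact ⟨.andR rb, (falsifiesLeaves_image_cons (fun _ => rfl)).2 hrb⟩
  | or A B iha ihb =>
    obtain ⟨hA, hB⟩ := Bool.or_eq_false_iff.1 h
    obtain ⟨ra, hra⟩ := iha hA
    obtain ⟨rb, hrb⟩ := ihb hB
    refine ⟨.or ra rb, falsifiesLeaves_union.2 ⟨?_, ?_⟩⟩
    · exact (falsifiesLeaves_image_cons (fun _ => rfl)).2 hra
    · exact (falsifiesLeaves_image_cons (fun _ => rfl)).2 hrb

theorem not_hasComplementaryPair_iff :
    ¬ A.HasComplementaryPair M ↔ ∃ v, A.FalsifiesLeaves v M := by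
  classical
  constructor
  · intro hM
    refine ⟨fun n => decide (∃ q ∈ M, A.labelAt q = some (.neg n)), ?_⟩
    rintro p hp (n | n) hl
    · simpa [Lit.eval] using fun q hq hq' => hM ⟨p, hp, q, hq, n, hl, hq'⟩
    · simpa [Lit.eval] using ⟨p, hp, hl⟩
  · rintro ⟨v, hv⟩ ⟨p, hp, q, hq, n, hpos, hneg⟩
    have hn : v n = false := hv p hp _ hpos
    simpa [Lit.eval, hn] using hv q hq _ hneg

end Formula

theorem tautology_iff_cocliques_complementary (A : Formula) :
    (∀ v : Nat → Bool, A.eval v = true) ↔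
      ∀ M ∈ A.cocliques, ∃ p ∈ M, ∃ q ∈ M, ∃ n : Nat,
        A.labelAt p = some (.pos n) ∧ A.labelAt q = some (.neg n) := by
  constructor
  · rintro htaut _ ⟨r, rfl⟩
    by_contra hM
    obtain ⟨v, hv⟩ := Formula.not_hasComplementaryPair_iff.1 hM
    simpa [htaut v] using r.eval_eq_false hv
  · intro hcompl v
    by_contra hv
    obtain ⟨r, hr⟩ := Formula.exists_coRes_falsifiesLeaves (Bool.eq_false_iff.2 hv)
    exact Formula.not_hasComplementaryPair_iff.2 ⟨v, hr⟩ (hcompl _ ⟨r, rfl⟩)
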